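/- Let R = F[G, η, α] be a crossed product of a left-ordered group G over a skew field F. Then the group of units of R is exactly F^× · X_G = {a x_g | a ∈ F^×, g ∈ G}. -/

import Mathlib

/-! A left-ordered group has Mathlib's `TwoUniqueProds` property: for finite `A`, `B` with
`|A| |B| > 1`, two distinct pairs of `A × B` have products that no other pair attains. In the
crossed product, the coefficient of `u v` at such a product is a product of nonzero coefficients of
`u` and `v` twisted by `α` and `η`, hence nonzero. If `u v = 1`, both unique products therefore
equal `1`, contradicting their uniqueness; so `u` has a single nonzero coefficient. Conversely
`x_g` is invertible, since `x_g x_{g⁻¹}` and `x_{g⁻¹} x_g` are nonzero scalars. -/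

open Finset Finsupp

namespace CrossedProduct

variable {F S G : Type*} [DivisionRing F] [Ring S]

section Coefficients

variable (ι : F →+* S) (x : G → S)

noncomputable def ofCoeffs : (G →₀ F) →+ S :=
  liftAddHom fun g => (AddMonoidHom.mulRight (x g)).comp ι.toAddMonoidHom

variable {ι x}

@[simp]
theorem ofCoeffs_single (g : G) (a : F) : ofCoeffs ι x (single g a) = ι a * x g := by
  simp [ofCoeffs]

theorem ofCoeffs_apply (f : G →₀ F) : ofCoeffs ι x f = ∑ g ∈ f.support, ι (f g) * x g := by
  simp [ofCoeffs, Finsupp.sum]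

theorem ofCoeffs_injective
    (hindep : ∀ (s : Finset G) (c : G → F), ∑ g ∈ s, ι (c g) * x g = 0 → ∀ g ∈ s, c g = 0) :
    Function.Injective (ofCoeffs ι x) := by
  refine (injective_iff_map_eq_zero _).mpr fun f hf => ?_
  rw [ofCoeffs_apply] at hf
  ext g
  by_contra hg
  exact hg (hindep _ _ hf g (mem_support_iff.mpr hg))

theorem ofCoeffs_surjective
    (hspan : ∀ y : S, ∃ (s : Finset G) (c : G → F), y = ∑ g ∈ s, ι (c g) * x g) :
    Function.Surjective (ofCoeffs ι x) := by
  intro y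
  obtain ⟨s, c, rfl⟩ := hspan y
  exact ⟨∑ g ∈ s, single g (c g), by simp⟩

end Coefficients

noncomputable def crossedMul [Mul G] (η : G → G → Fˣ) (α : G → F ≃+* F) (f f' : G →₀ F) :
    G →₀ F :=
  ∑ p ∈ f.support ×ˢ f'.support, single (p.1 * p.2) (f p.1 * α p.1 (f' p.2) * η p.1 p.2)

variable {ι : F →+* S} {x : G → S} {η : G → G → Fˣ} {α : G → F ≃+* F}

section Mul

variable [Mul G]

theorem monomial_mul_monomial
    (hmul : ∀ g h : G, x g * x h = ι (η g h) * x (g * h))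
    (hcomm : ∀ (g : G) (a : F), x g * ι a = ι (α g a) * x g) (a b : F) (g h : G) :
    ι a * x g * (ι b * x h) = ι (a * α g b * η g h) * x (g * h) := by
  rw [mul_assoc, ← mul_assoc (x g), hcomm, mul_assoc, hmul]
  simp only [map_mul, mul_assoc]

theorem ofCoeffs_crossedMul
    (hmul : ∀ g h : G, x g * x h = ι (η g h) * x (g * h))
    (hcomm : ∀ (g : G) (a : F), x g * ι a = ι (α g a) * x g) (f f' : G →₀ F) :
    ofCoeffs ι x (crossedMul η α f f') = ofCoeffs ι x f * ofCoeffs ι x f' := by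
  rw [ofCoeffs_apply f, ofCoeffs_apply f', sum_mul_sum, ← sum_product', crossedMul, map_sum]
  simp only [ofCoeffs_single, monomial_mul_monomial hmul hcomm]

theorem crossedMul_apply_of_uniqueMul {f f' : G →₀ F} {a b : G} (ha : a ∈ f.support)
    (hb : b ∈ f'.support) (hab : UniqueMul f.support f'.support a b) :
    crossedMul η α f f' (a * b) = f a * α a (f' b) * η a b := by
  rw [crossedMul, finsetSum_apply, sum_eq_single_of_mem (a, b) (mk_mem_product ha hb)]
  · simp
  · rintro ⟨a', b'⟩ hp hne
    rw [mem_product] at hp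
    refine single_eq_of_ne fun h => hne ?_
    obtain ⟨rfl, rfl⟩ := hab hp.1 hp.2 h.symm
    rfl

theorem crossedMul_ne_zero_of_uniqueMul {f f' : G →₀ F} {a b : G} (ha : a ∈ f.support)
    (hb : b ∈ f'.support) (hab : UniqueMul f.support f'.support a b) :
    crossedMul η α f f' (a * b) ≠ 0 := by
  rw [crossedMul_apply_of_uniqueMul ha hb hab]
  exact mul_ne_zero (mul_ne_zero (mem_support_iff.mp ha)
    ((map_ne_zero _).mpr (mem_support_iff.mp hb))) (η a b).ne_zero

theorem support_nonempty_of_crossedMul_ne_zero {f f' : G →₀ F}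
    (h : crossedMul η α f f' ≠ 0) : f.support.Nonempty ∧ f'.support.Nonempty := by
  constructor <;> rw [nonempty_iff_ne_empty] <;> rintro hf <;> simp [crossedMul, hf] at h

end Mul

section MulOneClass

variable [MulOneClass G]

theorem mul_eq_one_of_crossedMul_eq_single_one {f f' : G →₀ F} {a b : G}
    (h : crossedMul η α f f' = single 1 1) (ha : a ∈ f.support) (hb : b ∈ f'.support)
    (hab : UniqueMul f.support f'.support a b) : a * b = 1 := by
  by_contra hne
  apply crossedMul_ne_zero_of_uniqueMul (η := η) (α := α) ha hb hab
  rw [h, single_eq_of_ne hne]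

theorem exists_eq_single_of_crossedMul_eq_single_one [TwoUniqueProds G] {f f' : G →₀ F}
    (h : crossedMul η α f f' = single 1 1) : ∃ g, ∃ a ≠ 0, f = single g a := by
  obtain ⟨hA, hB⟩ := support_nonempty_of_crossedMul_ne_zero (h ▸ single_ne_zero.mpr one_ne_zero)
  have hcard : #f.support * #f'.support ≤ 1 := by
    by_contra! hlt
    obtain ⟨p, hp, q, hq, hpq, hup, huq⟩ := TwoUniqueProds.uniqueMul_of_one_lt_card hlt
    rw [mem_product] at hp hq
    have hqp : q.1 * q.2 = p.1 * p.2 := by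
      rw [mul_eq_one_of_crossedMul_eq_single_one h hq.1 hq.2 huq,
        mul_eq_one_of_crossedMul_eq_single_one h hp.1 hp.2 hup]
    obtain ⟨h1, h2⟩ := hup hq.1 hq.2 hqp
    exact hpq (Prod.ext h1 h2).symm
  have := hA.card_pos
  have := hB.card_pos
  exact card_support_eq_one'.mp (by nlinarith)

end MulOneClass

theorem isUnit_monomial [Group G] (hx1 : x 1 = 1)
    (hmul : ∀ g h : G, x g * x h = ι (η g h) * x (g * h))
    (a : Fˣ) (g : G) : IsUnit (ι a * x g) := by
  have hxg : IsUnit (x g) := isUnit_iff_exists_and_exists.mpr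
    ⟨⟨x g⁻¹ * ι ↑(η g g⁻¹)⁻¹, by
      rw [← mul_assoc, hmul, mul_inv_cancel, hx1, mul_one, ← map_mul, Units.mul_inv, map_one]⟩,
     ⟨ι ↑(η g⁻¹ g)⁻¹ * x g⁻¹, by
      rw [mul_assoc, hmul, inv_mul_cancel, hx1, mul_one, ← map_mul, Units.inv_mul, map_one]⟩⟩
  exact (a.isUnit.map ι).mul hxg

end CrossedProduct

open CrossedProduct

/-- The group of units of a crossed product `F[G, η, α]` of a left-ordered
group `G` over a skew field `F` is exactly `F^× X_G = {a·x_g | a ∈ F^×, g ∈ G}`. -/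
theorem stmt15 {F S G : Type*} [DivisionRing F] [Ring S] [Group G] [LinearOrder G]
    (hinv : ∀ a b c : G, a ≤ b → c * a ≤ c * b)
    (ι : F →+* S) (x : G → S) (η : G → G → Fˣ) (α : G → F ≃+* F)
    (hx1 : x 1 = 1)
    (hmul : ∀ g h : G, x g * x h = ι (η g h) * x (g * h))
    (hcomm : ∀ (g : G) (a : F), x g * ι a = ι (α g a) * x g)
    (hindep : ∀ (s : Finset G) (c : G → F),
      ∑ g ∈ s, ι (c g) * x g = 0 → ∀ g ∈ s, c g = 0)
    (hspan : ∀ y : S, ∃ (s : Finset G) (c : G → F), y = ∑ g ∈ s, ι (c g) * x g) :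
    ∀ u : S, IsUnit u ↔ ∃ (a : Fˣ) (g : G), u = ι a * x g := by
  have : MulLeftMono G := ⟨fun c _ _ h => hinv _ _ c h⟩
  intro u
  refine ⟨fun hu => ?_, fun ⟨a, g, hu⟩ => hu ▸ isUnit_monomial hx1 hmul a g⟩
  obtain ⟨v, huv⟩ := hu.exists_right_inv
  obtain ⟨f, rfl⟩ := ofCoeffs_surjective hspan u
  obtain ⟨f', rfl⟩ := ofCoeffs_surjective hspan v
  have hprod : crossedMul η α f f' = single 1 1 := by
    apply ofCoeffs_injective hindep
    rw [ofCoeffs_crossedMul hmul hcomm, huv, ofCoeffs_single, map_one, one_mul, hx1]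
  obtain ⟨g, a, ha, rfl⟩ := exists_eq_single_of_crossedMul_eq_single_one hprod
  exact ⟨Units.mk0 a ha, g, ofCoeffs_single g a⟩
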